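/- For all σ > 0, γ > 0 and all u ∈ ℝ, the centered Voigt density equals a variance mixture of centered Gaussians with Levy(σ², γ²) mixing: ∫_ℝ [γ/(π(x² + γ²))] · [1/(σ√(2π))] e^{−(u−x)²/(2σ²)} dx = ∫_{σ²}^{∞} (1/√(2π v)) e^{−u²/(2v)} · (γ/√(2π)) (v − σ²)^{−3/2} e^{−γ²/(2(v − σ²))} dv. -/

import Mathlib

/-!
Lévy subordination: mixing the centred Gaussians `N(0, s)` over a Lévy(0, γ²) distributed
variance `s` gives the Cauchy(0, γ) law; after the substitution `t = 1/s` this is an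
exponential integral. Convolving with `N(0, σ²)` and exchanging the two integrals (Tonelli)
turns each `N(0, s)` into `N(0, s + σ²)`, and the substitution `v = s + σ²` shifts the
mixing law to Lévy(σ², γ²).
-/

open MeasureTheory ProbabilityTheory Real Set
open scoped NNReal

noncomputable def gaussDensity (v x : ℝ) : ℝ := 1 / √(2 * π * v) * exp (-x ^ 2 / (2 * v))

/-- The Lévy(0, γ²) density, parametrised by `γ` since it is the mixing law of Cauchy(0, γ). -/
noncomputable def levyDensity (γ s : ℝ) : ℝ :=
  γ / √(2 * π) * s ^ (-(3 : ℝ) / 2) * exp (-γ ^ 2 / (2 * s))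

lemma gaussDensity_nonneg (v x : ℝ) : 0 ≤ gaussDensity v x := by
  unfold gaussDensity; positivity

lemma gaussDensity_le {v : ℝ} (hv : 0 ≤ v) (x : ℝ) : gaussDensity v x ≤ 1 / √(2 * π * v) :=
  mul_le_of_le_one_right (by positivity)
    (exp_le_one_iff.2 (div_nonpos_of_nonpos_of_nonneg (neg_nonpos.2 (sq_nonneg x)) (by positivity)))

lemma levyDensity_nonneg {γ s : ℝ} (hγ : 0 ≤ γ) (hs : 0 ≤ s) : 0 ≤ levyDensity γ s := by
  unfold levyDensity; positivity

@[fun_prop]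
lemma measurable_gaussDensity : Measurable fun p : ℝ × ℝ => gaussDensity p.1 p.2 := by
  unfold gaussDensity; fun_prop

@[fun_prop]
lemma measurable_levyDensity (γ : ℝ) : Measurable (levyDensity γ) := by
  unfold levyDensity; fun_prop

lemma gaussDensity_sq {σ : ℝ} (hσ : 0 < σ) (y : ℝ) :
    gaussDensity (σ ^ 2) y = 1 / (σ * √(2 * π)) * exp (-y ^ 2 / (2 * σ ^ 2)) := by
  rw [gaussDensity, mul_comm (2 * π), sqrt_mul (sq_nonneg σ), sqrt_sq hσ.le]

lemma gaussDensity_sub_eq_gaussianPDFReal {v : ℝ} (hv : 0 ≤ v) (m x : ℝ) :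
    gaussDensity v (x - m) = gaussianPDFReal m ⟨v, hv⟩ x := by
  rw [gaussDensity, one_div]
  rfl

lemma integral_gaussDensity_sub {v : ℝ} (hv : 0 < v) (m : ℝ) :
    ∫ x, gaussDensity v (x - m) = 1 := by
  simp_rw [gaussDensity_sub_eq_gaussianPDFReal hv.le m]
  exact integral_gaussianPDFReal_eq_one m (fun h => hv.ne' (congrArg NNReal.toReal h))

/-- Completing the square in `x`. -/
lemma gaussDensity_mul_gaussDensity_sub {s t : ℝ} (hs : 0 < s) (ht : 0 < t) (u x : ℝ) :
    gaussDensity s x * gaussDensity t (u - x) =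
      gaussDensity (s + t) u * gaussDensity (s * t / (s + t)) (x - s * u / (s + t)) := by
  have hst : 0 < s + t := add_pos hs ht
  simp only [gaussDensity, one_div]
  rw [mul_mul_mul_comm, mul_mul_mul_comm (√(2 * π * (s + t)))⁻¹, ← exp_add, ← exp_add,
    ← mul_inv, ← mul_inv, ← sqrt_mul (by positivity), ← sqrt_mul (by positivity)]
  congr 1
  · congr 2
    field_simp
  · congr 1
    field_simp
    ring

lemma integral_gaussDensity_mul_gaussDensity_sub {s t : ℝ} (hs : 0 < s) (ht : 0 < t) (u : ℝ) :
    ∫ x, gaussDensity s x * gaussDensity t (u - x) = gaussDensity (s + t) u := by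
  simp_rw [gaussDensity_mul_gaussDensity_sub hs ht u]
  rw [integral_const_mul, integral_gaussDensity_sub (by positivity), mul_one]

section InvSubstitution

variable {E : Type*} [NormedAddCommGroup E] [NormedSpace ℝ E]

lemma integral_comp_inv_Ioi (g : ℝ → E) :
    ∫ s in Ioi 0, (s ^ 2)⁻¹ • g s⁻¹ = ∫ t in Ioi 0, g t := by
  rw [← integral_comp_rpow_Ioi g (p := -1) (by norm_num)]
  refine setIntegral_congr_fun measurableSet_Ioi fun s hs => ?_
  simp [show (-1 : ℝ) - 1 = -2 by norm_num, rpow_neg (le_of_lt hs)]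

lemma integrableOn_comp_inv_Ioi_iff (g : ℝ → E) :
    IntegrableOn (fun s => (s ^ 2)⁻¹ • g s⁻¹) (Ioi 0) ↔ IntegrableOn g (Ioi 0) := by
  rw [← integrableOn_Ioi_comp_rpow_iff g (p := -1) (by norm_num)]
  refine integrableOn_congr_fun (fun s hs => ?_) measurableSet_Ioi
  simp [show (-1 : ℝ) - 1 = -2 by norm_num, rpow_neg (le_of_lt hs)]

end InvSubstitution

lemma gaussDensity_mul_levyDensity {s : ℝ} (hs : 0 < s) (γ x : ℝ) :
    gaussDensity s x * levyDensity γ s =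
      (s ^ 2)⁻¹ • (γ / (2 * π) * exp (-((x ^ 2 + γ ^ 2) / 2) * s⁻¹)) := by
  have h32 : s ^ (-(3 : ℝ) / 2) = (s ^ 2)⁻¹ * √s := by
    rw [show -(3 : ℝ) / 2 = 1 / 2 + -2 by norm_num, rpow_add hs, ← sqrt_eq_rpow,
      rpow_neg hs.le, rpow_two, mul_comm]
  have hsqrt : √(2 * π * s) = √(2 * π) * √s := sqrt_mul (by positivity) s
  have : √s ≠ 0 := (sqrt_pos.2 hs).ne'
  simp only [gaussDensity, levyDensity, smul_eq_mul, h32, hsqrt]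
  rw [show -((x ^ 2 + γ ^ 2) / 2) * s⁻¹ = -x ^ 2 / (2 * s) + -γ ^ 2 / (2 * s) by ring, exp_add]
  field_simp
  rw [sq_sqrt (by positivity)]

lemma integral_gaussDensity_mul_levyDensity {γ : ℝ≥0} (hγ : γ ≠ 0) (x : ℝ) :
    ∫ s in Ioi 0, gaussDensity s x * levyDensity γ s = cauchyPDFReal 0 γ x := by
  have hγ' : (γ : ℝ) ≠ 0 := NNReal.coe_ne_zero.2 hγ
  have hc : -((x ^ 2 + γ ^ 2) / 2) < 0 := neg_neg_of_pos (by positivity)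
  rw [setIntegral_congr_fun measurableSet_Ioi
      fun s (hs : s ∈ Ioi 0) => gaussDensity_mul_levyDensity hs γ x,
    integral_comp_inv_Ioi fun t => γ / (2 * π) * exp (-((x ^ 2 + γ ^ 2) / 2) * t),
    integral_const_mul, integral_exp_mul_Ioi hc, cauchyPDFReal_def]
  field_simp
  simp

lemma integrableOn_gaussDensity_mul_levyDensity {γ : ℝ} (hγ : γ ≠ 0) (x : ℝ) :
    IntegrableOn (fun s => gaussDensity s x * levyDensity γ s) (Ioi 0) := by
  have hc : 0 < (x ^ 2 + γ ^ 2) / 2 := by positivity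
  rw [integrableOn_congr_fun (fun s (hs : s ∈ Ioi 0) => gaussDensity_mul_levyDensity hs γ x)
      measurableSet_Ioi,
    integrableOn_comp_inv_Ioi_iff fun t => γ / (2 * π) * exp (-((x ^ 2 + γ ^ 2) / 2) * t)]
  exact (exp_neg_integrableOn_Ioi 0 hc).const_mul _

lemma integral_integral_swap_of_nonneg {α β : Type*} [MeasurableSpace α] [MeasurableSpace β]
    {μ : Measure α} {ν : Measure β} [SFinite μ] [SFinite ν] {f : α → β → ℝ}
    (hf : AEStronglyMeasurable (Function.uncurry f) (μ.prod ν)) (hf_nonneg : ∀ x, 0 ≤ᵐ[ν] f x)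
    (hf_int : ∀ x, Integrable (f x) ν) (h_int : Integrable (fun x => ∫ y, f x y ∂ν) μ) :
    ∫ x, ∫ y, f x y ∂ν ∂μ = ∫ y, ∫ x, f x y ∂μ ∂ν := by
  refine integral_integral_swap ((integrable_prod_iff hf).2 ⟨ae_of_all _ hf_int, ?_⟩)
  refine h_int.congr (ae_of_all _ fun x => integral_congr_ae ?_)
  filter_upwards [hf_nonneg x] with y hy using (norm_of_nonneg hy).symm

lemma integral_cauchyPDFReal_mul_gaussDensity_sub {γ : ℝ≥0} (hγ : γ ≠ 0) {t : ℝ} (ht : 0 < t)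
    (u : ℝ) :
    ∫ x, cauchyPDFReal 0 γ x * gaussDensity t (u - x) =
      ∫ s in Ioi 0, gaussDensity (s + t) u * levyDensity γ s := by
  let F : ℝ → ℝ → ℝ := fun x s => gaussDensity s x * levyDensity γ s * gaussDensity t (u - x)
  have hF : ∀ x, ∫ s in Ioi 0, F x s = cauchyPDFReal 0 γ x * gaussDensity t (u - x) := fun x => by
    rw [integral_mul_const, integral_gaussDensity_mul_levyDensity hγ]
  calc _ = ∫ x, ∫ s in Ioi 0, F x s := by simp_rw [hF]
    _ = ∫ s in Ioi 0, ∫ x, F x s := by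
        refine integral_integral_swap_of_nonneg ?_ (fun x => ?_) (fun x => ?_) ?_
        · exact (by fun_prop : Measurable (Function.uncurry F)).aestronglyMeasurable
        · filter_upwards [ae_restrict_mem measurableSet_Ioi] with s (hs : 0 < s)
          exact mul_nonneg (mul_nonneg (gaussDensity_nonneg _ _) (levyDensity_nonneg γ.2 hs.le))
            (gaussDensity_nonneg _ _)
        · exact (integrableOn_gaussDensity_mul_levyDensity (by exact_mod_cast hγ) x).mul_const _
        · simp_rw [hF]
          refine (integrable_cauchyPDFReal 0).mul_bdd (c := 1 / √(2 * π * t))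
            (by fun_prop : Measurable fun x => gaussDensity t (u - x)).aestronglyMeasurable
            (ae_of_all _ fun x => ?_)
          rw [norm_of_nonneg (gaussDensity_nonneg _ _)]
          exact gaussDensity_le ht.le _
    _ = ∫ s in Ioi 0, gaussDensity (s + t) u * levyDensity γ s := by
        refine setIntegral_congr_fun measurableSet_Ioi fun s (hs : 0 < s) => ?_
        simp_rw [F, mul_right_comm _ (levyDensity γ s), integral_mul_const,
          integral_gaussDensity_mul_gaussDensity_sub hs ht]

lemma setIntegral_Ioi_comp_add_right {E : Type*} [NormedAddCommGroup E] [NormedSpace ℝ E]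
    (f : ℝ → E) (a c : ℝ) : ∫ s in Ioi a, f (s + c) = ∫ v in Ioi (a + c), f v := by
  have := (measurePreserving_add_right volume c).setIntegral_preimage_emb
    (measurableEmbedding_addRight c) f (Ioi (a + c))
  rwa [preimage_add_const_Ioi, add_sub_cancel_right] at this

theorem voigt_eq_normal_scale_mixture (σ γ : ℝ) (hσ : 0 < σ) (hγ : 0 < γ) (u : ℝ) :
    (∫ x : ℝ, (γ / (π * (x ^ 2 + γ ^ 2))) *
        (1 / (σ * Real.sqrt (2 * π)) * Real.exp (-(u - x) ^ 2 / (2 * σ ^ 2)))) =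
      ∫ v in Set.Ioi (σ ^ 2), (1 / Real.sqrt (2 * π * v)) * Real.exp (-u ^ 2 / (2 * v)) *
        (γ / Real.sqrt (2 * π) * (v - σ ^ 2) ^ (-(3 : ℝ) / 2) *
          Real.exp (-γ ^ 2 / (2 * (v - σ ^ 2)))) := by
  lift γ to ℝ≥0 using hγ.le
  calc _ = ∫ x, cauchyPDFReal 0 γ x * gaussDensity (σ ^ 2) (u - x) := by
        congr 1 with x
        rw [gaussDensity_sq hσ, cauchyPDFReal_def, sub_zero]
        field_simp
    _ = ∫ s in Ioi 0, gaussDensity (s + σ ^ 2) u * levyDensity γ s :=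
        integral_cauchyPDFReal_mul_gaussDensity_sub (by exact_mod_cast hγ.ne') (by positivity) u
    _ = ∫ v in Ioi (σ ^ 2), gaussDensity v u * levyDensity γ (v - σ ^ 2) := by
        have := setIntegral_Ioi_comp_add_right
          (fun v => gaussDensity v u * levyDensity γ (v - σ ^ 2)) 0 (σ ^ 2)
        simpa only [add_sub_cancel_right, zero_add] using this
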